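/- Converse of the Weyl ball theorem: Let R ≻ 0 be Hermitian, and suppose ρ_d := SᴴR⁻¹S - T ⪰ 0 with T Hermitian. For any contractive n×n matrix X, the matrix G = R⁻¹S + R^{-1/2} X ρ_d^{1/2} satisfies -GᴴRG + GᴴS + SᴴG - T ⪰ 0. -/

import Mathlib

open ComplexOrder Matrix

/-- The positive semidefinite square root of a positive semidefinite matrix
(the definition `Matrix.PosSemidef.sqrt` of the older Mathlib, removed since). -/
noncomputable def Matrix.PosSemidef.sqrt {n : Type*} [Fintype n] [DecidableEq n] {𝕜 : Type*}
    [RCLike 𝕜] {A : Matrix n n 𝕜} (hA : A.PosSemidef) : Matrix n n 𝕜 :=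
  (hA.1.eigenvectorUnitary : Matrix n n 𝕜) * diagonal ((↑) ∘ (√·) ∘ hA.1.eigenvalues) *
    (star hA.1.eigenvectorUnitary : Matrix n n 𝕜)

/-! Completing the square gives `-GᴴRG + GᴴS + SᴴG = SᴴR⁻¹S - (G - R⁻¹S)ᴴR(G - R⁻¹S)`.
For `G - R⁻¹S = R^{-1/2} X ρ^{1/2}` the subtracted term is `ρ^{1/2} XᴴX ρ^{1/2}`, and since
`SᴴR⁻¹S - T = ρ^{1/2} ρ^{1/2}` the matrix in question is the congruence `ρ^{1/2} (1 - XᴴX) ρ^{1/2}`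
of a positive semidefinite matrix. -/

namespace Matrix

section CompleteSquare

variable {m k α : Type*} [Fintype m] [DecidableEq m] [CommRing α] [StarRing α]

theorem neg_conjTranspose_mul_mul_add_eq_sub {R : Matrix m m α} (hR : R.IsHermitian)
    (hRdet : IsUnit R.det) (G S : Matrix m k α) :
    -(Gᴴ * R * G) + Gᴴ * S + Sᴴ * G =
      Sᴴ * R⁻¹ * S - (G - R⁻¹ * S)ᴴ * R * (G - R⁻¹ * S) := by
  have hRinv : R⁻¹ᴴ = R⁻¹ := hR.inv.eq
  simp only [conjTranspose_sub, conjTranspose_mul, hRinv, Matrix.sub_mul, Matrix.mul_sub,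
    Matrix.mul_assoc, mul_nonsing_inv_cancel_left _ _ hRdet,
    nonsing_inv_mul_cancel_left _ _ hRdet]
  abel

theorem conjTranspose_inv_mul_mul_inv_mul_of_mul_self {Q R : Matrix m m α}
    (hQ : Q.IsHermitian) (hQR : Q * Q = R) (hQdet : IsUnit Q.det) (Y : Matrix m k α) :
    (Q⁻¹ * Y)ᴴ * R * (Q⁻¹ * Y) = Yᴴ * Y := by
  simp only [← hQR, conjTranspose_mul, conjTranspose_nonsing_inv, hQ.eq, Matrix.mul_assoc,
    mul_nonsing_inv_cancel_left _ _ hQdet, nonsing_inv_mul_cancel_left _ _ hQdet]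

end CompleteSquare

namespace PosSemidef

variable {n 𝕜 : Type*} [Fintype n] [DecidableEq n] [RCLike 𝕜] {A : Matrix n n 𝕜}

theorem sqrt_mul_self (hA : A.PosSemidef) : hA.sqrt * hA.sqrt = A := by
  have hU : (star hA.1.eigenvectorUnitary : Matrix n n 𝕜) *
      (hA.1.eigenvectorUnitary : Matrix n n 𝕜) = 1 := Unitary.coe_star_mul_self _
  conv_rhs => rw [hA.1.spectral_theorem]
  unfold Matrix.PosSemidef.sqrt
  rw [show ∀ a b c d e f : Matrix n n 𝕜, a * b * c * (d * e * f) = a * (b * (c * d) * e) * f by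
    intros; simp only [Matrix.mul_assoc], hU, Matrix.mul_one, diagonal_mul_diagonal]
  simp only [Function.comp_def, ← RCLike.ofReal_mul,
    fun i => Real.mul_self_sqrt (hA.eigenvalues_nonneg i), Unitary.conjStarAlgAut_apply]

theorem isHermitian_sqrt (hA : A.PosSemidef) : hA.sqrt.IsHermitian := by
  unfold Matrix.PosSemidef.sqrt IsHermitian
  rw [conjTranspose_mul, conjTranspose_mul, diagonal_conjTranspose, Matrix.mul_assoc]
  rw [show star (RCLike.ofReal ∘ (fun x : ℝ => √x) ∘ hA.1.eigenvalues) =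
      ((RCLike.ofReal ∘ (fun x : ℝ => √x) ∘ hA.1.eigenvalues) : n → 𝕜) from
    funext fun i => by simp]
  simp only [← star_eq_conjTranspose, star_star]

end PosSemidef

theorem PosDef.isUnit_det_sqrt {n 𝕜 : Type*} [Fintype n] [DecidableEq n] [RCLike 𝕜]
    {A : Matrix n n 𝕜} (hA : A.PosDef) : IsUnit hA.posSemidef.sqrt.det :=
  isUnit_of_mul_isUnit_left <| by
    rw [← det_mul, hA.posSemidef.sqrt_mul_self]
    exact (isUnit_iff_isUnit_det A).mp hA.isUnit

end Matrix

theorem weyl_ball_converse_general (n : ℕ) (R S T X : Matrix (Fin n) (Fin n) ℂ)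
    (hR : R.PosDef)
    (hρ : (Sᴴ * R⁻¹ * S - T).PosSemidef)
    (hX : (1 - Xᴴ * X).PosSemidef) :
    (-((R⁻¹ * S + (hR.posSemidef.sqrt)⁻¹ * X * hρ.sqrt)ᴴ * R *
          (R⁻¹ * S + (hR.posSemidef.sqrt)⁻¹ * X * hρ.sqrt)) +
        (R⁻¹ * S + (hR.posSemidef.sqrt)⁻¹ * X * hρ.sqrt)ᴴ * S +
        Sᴴ * (R⁻¹ * S + (hR.posSemidef.sqrt)⁻¹ * X * hρ.sqrt) - T).PosSemidef := by
  set P := hρ.sqrt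
  have hPP : P * P = Sᴴ * R⁻¹ * S - T := hρ.sqrt_mul_self
  have hP : Pᴴ = P := hρ.isHermitian_sqrt.eq
  rw [neg_conjTranspose_mul_mul_add_eq_sub hR.isHermitian
      ((isUnit_iff_isUnit_det R).mp hR.isUnit), add_sub_cancel_left, Matrix.mul_assoc _ X,
    conjTranspose_inv_mul_mul_inv_mul_of_mul_self hR.posSemidef.isHermitian_sqrt
      hR.posSemidef.sqrt_mul_self hR.isUnit_det_sqrt]
  have hcongr : Sᴴ * R⁻¹ * S - (X * P)ᴴ * (X * P) - T = P * (1 - Xᴴ * X) * Pᴴ := by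
    rw [hP, Matrix.mul_sub, Matrix.sub_mul, Matrix.mul_one, hPP, conjTranspose_mul, hP]
    simp only [Matrix.mul_assoc]
    abel
  rw [hcongr]
  exact hX.mul_mul_conjTranspose_same P

/-- converse of the Weyl ball theorem: for any contraction X,
G = R⁻¹S + R^{-1/2} X ρ_d^{1/2} satisfies -GᴴRG + GᴴS + SᴴG - T ⪰ 0. -/
theorem weyl_ball_converse (n : ℕ) (R S T X : Matrix (Fin n) (Fin n) ℂ)
    (hR : R.PosDef) (hT : T.IsHermitian)
    (hρ : (Sᴴ * R⁻¹ * S - T).PosSemidef)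
    (hX : (1 - Xᴴ * X).PosSemidef) :
    (-((R⁻¹ * S + (hR.posSemidef.sqrt)⁻¹ * X * hρ.sqrt)ᴴ * R *
          (R⁻¹ * S + (hR.posSemidef.sqrt)⁻¹ * X * hρ.sqrt)) +
        (R⁻¹ * S + (hR.posSemidef.sqrt)⁻¹ * X * hρ.sqrt)ᴴ * S +
        Sᴴ * (R⁻¹ * S + (hR.posSemidef.sqrt)⁻¹ * X * hρ.sqrt) - T).PosSemidef :=
  weyl_ball_converse_general n R S T X hR hρ hX
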